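/- If x ~_i x', then I_i(x) = I_i(x'), where I_i(x) denotes the smallest x-stable I-graded subspace of V_α containing ⊕_{j≠i} V_j. -/
import Mathlib


/- Setting: a quiver with vertex set `I`, arrows `Ω j k : j → k` (loops at `i` are `Ω i i`),
an `I`-graded vector space `V`, and the representation space
`E_α = ∀ j k, Ω j k → (V j →ₗ[ℂ] V k)`.  For `x ∈ E_α`, `IiSub Ω V i x` is the smallest
`x`-stable `I`-graded subspace containing `⊕_{j ≠ i} V j` (its `i`-component is `I_i(x)`). -/

/-- The representation space `E_α`. -/
abbrev RepSpace {I : Type*} (Ω : I → I → Type*) (V : I → Type*)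
    [∀ j, AddCommGroup (V j)] [∀ j, Module ℂ (V j)] :=
  ∀ j k : I, Ω j k → (V j →ₗ[ℂ] V k)

/-- A graded subspace `W` is stable under `x`. -/
def RepStable {I : Type*} (Ω : I → I → Type*) (V : I → Type*)
    [∀ j, AddCommGroup (V j)] [∀ j, Module ℂ (V j)]
    (x : RepSpace Ω V) (W : ∀ j, Submodule ℂ (V j)) : Prop :=
  ∀ j k : I, ∀ h : Ω j k, ∀ v ∈ W j, x j k h v ∈ W k

/-- `I_i(x)`: the smallest `x`-stable graded subspace containing all `V j`, `j ≠ i`. -/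
noncomputable def IiSub {I : Type*} (Ω : I → I → Type*) (V : I → Type*)
    [∀ j, AddCommGroup (V j)] [∀ j, Module ℂ (V j)]
    (i : I) (x : RepSpace Ω V) : ∀ j, Submodule ℂ (V j) :=
  sInf {W | RepStable Ω V x W ∧ ∀ j, j ≠ i → W j = ⊤}

/-- The relation `x ∼_i x'`. -/
def simRel {I : Type*} (Ω : I → I → Type*) (V : I → Type*)
    [∀ j, AddCommGroup (V j)] [∀ j, Module ℂ (V j)]
    (i : I) (x x' : RepSpace Ω V) : Prop :=
  (∀ j k : I, ∀ h : Ω j k, ¬(j = i ∧ k = i) → x j k h = x' j k h) ∧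
  (∀ h : Ω i i, ∀ v ∈ IiSub Ω V i x i, x i i h v = x' i i h v) ∧
  (∀ h : Ω i i, ∀ v : V i, x i i h v - x' i i h v ∈ IiSub Ω V i x i)

lemma mem_IiSub_iff {I : Type*} (Ω : I → I → Type*) (V : I → Type*)
    [∀ j, AddCommGroup (V j)] [∀ j, Module ℂ (V j)]
    (i : I) (x : RepSpace Ω V) (j : I) (v : V j) :
    v ∈ IiSub Ω V i x j ↔
      ∀ W ∈ {W | RepStable Ω V x W ∧ ∀ j, j ≠ i → W j = ⊤}, v ∈ W j := by
  simp only [IiSub, sInf_apply, iInf_apply, Submodule.mem_iInf]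
  exact ⟨fun H W hW => H ⟨W, hW⟩, fun H W => H W.1 W.2⟩

lemma IiSub_mem_set {I : Type*} (Ω : I → I → Type*) (V : I → Type*)
    [∀ j, AddCommGroup (V j)] [∀ j, Module ℂ (V j)]
    (i : I) (x : RepSpace Ω V) :
    RepStable Ω V x (IiSub Ω V i x) ∧ ∀ j, j ≠ i → IiSub Ω V i x j = ⊤ := by
  constructor
  · intro j k a v hv
    rw [mem_IiSub_iff] at hv ⊢
    intro W hW
    exact hW.1 j k a v (hv W hW)
  · intro j hj
    rw [eq_top_iff]
    intro v _
    rw [mem_IiSub_iff]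
    intro W hW
    rw [hW.2 j hj]
    trivial

/-- if `x ∼_i x'` then `I_i(x) = I_i(x')`. -/
theorem IiSub_eq_of_simRel {I : Type*} (Ω : I → I → Type*) (V : I → Type*)
    [∀ j, AddCommGroup (V j)] [∀ j, Module ℂ (V j)] (i : I)
    (x x' : RepSpace Ω V) (h : simRel Ω V i x x') :
    IiSub Ω V i x = IiSub Ω V i x' := by
  obtain ⟨h1, h2, h3⟩ := h
  obtain ⟨hstab, htop⟩ := IiSub_mem_set Ω V i x
  obtain ⟨hstab', htop'⟩ := IiSub_mem_set Ω V i x'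
  -- I_i(x) is x'-stable
  have key : RepStable Ω V x' (IiSub Ω V i x) := by
    intro j k a v hv
    by_cases hjk : j = i ∧ k = i
    · obtain ⟨rfl, rfl⟩ := hjk
      rw [← h2 a v hv]
      exact hstab _ _ a v hv
    · rw [← h1 j k a hjk]
      exact hstab j k a v hv
  have le1 : IiSub Ω V i x' ≤ IiSub Ω V i x := sInf_le ⟨key, htop⟩
  -- I_i(x') is x-stable
  have key2 : RepStable Ω V x (IiSub Ω V i x') := by
    intro j k a v hv
    by_cases hjk : j = i ∧ k = i
    · obtain ⟨rfl, rfl⟩ := hjk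
      rw [h2 a v (le1 _ hv)]
      exact hstab' _ _ a v hv
    · rw [h1 j k a hjk]
      exact hstab' j k a v hv
  have le2 : IiSub Ω V i x ≤ IiSub Ω V i x' := sInf_le ⟨key2, htop'⟩
  exact le_antisymm le2 le1
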